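/- An AB3 abelian category A is equivalent to the category of modules over a ring if and only if A has a self-small projective generator (equivalently, a compact projective generator). -/

import Mathlib

/-!
The equivalence is `Hom(P, -) : C ⥤ Mod-(End P)ᵐᵒᵖ`. Self-smallness says precisely that the
coproduct injections form a basis of the `(End P)ᵐᵒᵖ`-module `Hom(P, ∐_J P)`, so `Hom(P, -)` sends
`∐_J P` to a free module and is bijective on morphisms out of `∐_J P`. Since `P` is a projective
generator, `Hom(P, -)` is exact and faithful, every object is a cokernel of a map between such
coproducts, and every module is a cokernel of a map between free modules; this gives fullness and
essential surjectivity. Conversely an equivalence transports the projective generator `R`, which is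
self-small because `Hom(R, ⊕_J R) = ⊕_J R`.
-/

open CategoryTheory CategoryTheory.Limits DirectSum

universe v u

namespace Paper

variable {C : Type u} [Category.{v} C] [Abelian C]

/-- The canonical map `∐_j Hom(P, A j) → Hom(P, ∐_j A j)`. -/
noncomputable def coprodHomMap (P : C) {J : Type v} [DecidableEq J] (A : J → C)
    [HasCoproduct A] : (DirectSum J (fun j => (P ⟶ A j))) →+ (P ⟶ ∐ A) :=
  DirectSum.toAddMonoid fun j =>
    AddMonoidHom.mk' (fun f => f ≫ Sigma.ι A j) (fun f g => by
      simp [Preadditive.add_comp])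

theorem isSeparator_iff_exists_epi_sigma {D : Type*} [Category.{v} D] [HasCoproducts.{v} D]
    (P : D) : IsSeparator P ↔ ∀ X : D, ∃ (I : Type v) (p : (∐ fun _ : I => P) ⟶ X), Epi p := by
  refine ⟨fun h X => ⟨_, _, (isSeparator_iff_epi P).1 h X⟩,
    fun h => (isSeparator_def P).2 fun X Y f g hfg => ?_⟩
  obtain ⟨I, p, _⟩ := h X
  rw [← cancel_epi p]
  exact Sigma.hom_ext _ _ fun i => by simpa using hfg (Sigma.ι (fun _ : I => P) i ≫ p)

theorem coprodHomMap_of (P : C) {J : Type v} [DecidableEq J] (A : J → C) [HasCoproduct A]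
    (j : J) (f : P ⟶ A j) :
    coprodHomMap P A (DirectSum.of _ j f) = f ≫ Sigma.ι A j :=
  DirectSum.toAddMonoid_of _ _ _

def IsSelfSmall (P : C) [HasCoproducts.{v} C] : Prop :=
  ∀ (J : Type v) [DecidableEq J], Function.Bijective (coprodHomMap P (fun _ : J => P))

section FreeModule

variable (P : C)

theorem bijective_linearCombination_sigmaι_iff {J : Type v} [DecidableEq J]
    [HasCoproduct fun _ : J => P] :
    Function.Bijective (Finsupp.linearCombination (End P)ᵐᵒᵖ (Sigma.ι fun _ : J => P)) ↔
      Function.Bijective (coprodHomMap P (fun _ : J => P)) := by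
  classical
  let e : (J →₀ (End P)ᵐᵒᵖ) ≃+ ⨁ _ : J, (P ⟶ P) :=
    (Finsupp.mapRange.addEquiv MulOpposite.opAddEquiv.symm).trans finsuppAddEquivDFinsupp
  have h : (Finsupp.linearCombination (End P)ᵐᵒᵖ (Sigma.ι fun _ : J => P)).toAddMonoidHom =
      (coprodHomMap P (fun _ : J => P)).comp e.toAddMonoidHom :=
    Finsupp.addHom_ext fun j r => by
      simp only [e, LinearMap.toAddMonoidHom_coe, Finsupp.linearCombination_single,
        AddMonoidHom.comp_apply, AddEquiv.coe_toAddMonoidHom, AddEquiv.trans_apply,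
        Finsupp.mapRange.addEquiv_apply, Finsupp.mapRange_single]
      change r.unop ≫ _ = coprodHomMap P _ (Finsupp.toDFinsupp (Finsupp.single j r.unop))
      rw [Finsupp.toDFinsupp_single]
      exact (coprodHomMap_of P (fun _ : J => P) j r.unop).symm
  rw [← Function.Bijective.of_comp_iff _ e.bijective]
  exact iff_of_eq (congrArg (fun f => Function.Bijective (DFunLike.coe f)) h)

noncomputable def sigmaιBasis (J : Type v) [DecidableEq J] [HasCoproduct fun _ : J => P]
    (h : Function.Bijective (coprodHomMap P (fun _ : J => P))) :
    Module.Basis J (End P)ᵐᵒᵖ (P ⟶ ∐ fun _ : J => P) :=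
  have hlc := (bijective_linearCombination_sigmaι_iff P).2 h
  have hspan : ⊤ ≤ Submodule.span (End P)ᵐᵒᵖ (Set.range (Sigma.ι fun _ : J => P)) := by
    rw [← Finsupp.range_linearCombination, LinearMap.range_eq_top.2 hlc.2]
  Module.Basis.mk hlc.1 hspan

theorem coe_sigmaιBasis (J : Type v) [DecidableEq J] [HasCoproduct fun _ : J => P]
    (h : Function.Bijective (coprodHomMap P (fun _ : J => P))) :
    ⇑(sigmaιBasis P J h) = Sigma.ι _ := by
  unfold sigmaιBasis
  exact Module.Basis.coe_mk _ _

theorem preadditiveCoyonedaObj_map_surjective_of_sigma (J : Type v) [DecidableEq J]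
    [HasCoproduct fun _ : J => P] (h : Function.Bijective (coprodHomMap P (fun _ : J => P)))
    (Y : C) :
    Function.Surjective
      ((preadditiveCoyonedaObj P).map : ((∐ fun _ : J => P) ⟶ Y) → _) := fun φ =>
  ⟨Sigma.desc fun j => φ (Sigma.ι (fun _ : J => P) j), ModuleCat.hom_ext <|
    (sigmaιBasis P J h).ext fun j => by
      rw [coe_sigmaιBasis]
      exact Sigma.ι_desc _ j⟩

end FreeModule

section Equivalence

variable [HasCoproducts.{v} C] (P : C) [Projective P]

theorem full_preadditiveCoyonedaObj (hP : IsSeparator P) (hS : IsSelfSmall P) :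
    (preadditiveCoyonedaObj P).Full where
  map_surjective {X Y} φ := by
    let F := preadditiveCoyonedaObj P
    have : F.Faithful := (isSeparator_iff_faithful_preadditiveCoyonedaObj P).1 hP
    have : F.PreservesEpimorphisms :=
      (Projective.projective_iff_preservesEpimorphisms_preadditiveCoyonedaObj P).1 ‹_›
    have := (isSeparator_iff_epi P).1 hP
    classical
    let p := Sigma.desc fun f : P ⟶ X => f
    obtain ⟨g, hg⟩ : ∃ g, F.map g = F.map p ≫ φ :=
      preadditiveCoyonedaObj_map_surjective_of_sigma P _ (hS _) Y _
    let q := Sigma.desc fun f : P ⟶ kernel p => f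
    have hker : kernel.ι p ≫ g = 0 := by
      rw [← cancel_epi q, comp_zero]
      apply F.map_injective
      rw [Functor.map_zero, F.map_comp, F.map_comp, hg, ← Category.assoc (F.map (kernel.ι p)),
        ← F.map_comp, kernel.condition, F.map_zero, zero_comp, comp_zero]
    refine ⟨Abelian.epiDesc p g hker, ?_⟩
    rw [← cancel_epi (F.map p), ← F.map_comp, Abelian.comp_epiDesc, hg]

theorem essSurj_preadditiveCoyonedaObj (hS : IsSelfSmall P) :
    (preadditiveCoyonedaObj P).EssSurj where
  mem_essImage M := by
    classical
    let F := preadditiveCoyonedaObj P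
    -- `M` is the cokernel of a map of free modules `Hom(P, ∐_K P) → Hom(P, ∐_M P)`; that map is
    -- `Hom(P, f)`, and since `Hom(P, -)` is right exact, `M ≅ Hom(P, cokernel f)`.
    let bM := sigmaιBasis P M (hS M)
    let π := bM.constr ℕ (id : M → M)
    have hπ : Function.Surjective π := fun m => ⟨bM m, bM.constr_basis ℕ id m⟩
    let bK := sigmaιBasis P (LinearMap.ker π) (hS _)
    obtain ⟨f, hf⟩ : ∃ f, (F.map f).hom = bK.constr ℕ Subtype.val :=
      (preadditiveCoyonedaObj_map_surjective_of_sigma P _ (hS _) _ (ModuleCat.ofHom _)).imp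
        fun _ => congrArg ModuleCat.Hom.hom
    have hrange : LinearMap.range (bK.constr ℕ Subtype.val) = LinearMap.ker π := by
      rw [Module.Basis.constr_range, Subtype.range_coe, Submodule.span_eq]
    let S := ShortComplex.mk (F.map f) (ModuleCat.ofHom π)
      (ModuleCat.hom_ext <| LinearMap.ext fun x => hrange.le ⟨x, (LinearMap.congr_fun hf x).symm⟩)
    have hS : S.Exact := S.moduleCat_exact_iff.2 fun x hx => by
      obtain ⟨y, hy⟩ := hrange.ge hx
      exact ⟨y, (LinearMap.congr_fun hf y).trans hy⟩
    have : Epi S.g := (ModuleCat.epi_iff_surjective _).2 hπ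
    exact ⟨cokernel f, ⟨PreservesCokernel.iso F f ≪≫
      (colimit.isColimit _).coconePointUniqueUpToIso hS.gIsCokernel⟩⟩

theorem isEquivalence_preadditiveCoyonedaObj (hP : IsSeparator P) (hS : IsSelfSmall P) : (preadditiveCoyonedaObj P).IsEquivalence where
  faithful := (isSeparator_iff_faithful_preadditiveCoyonedaObj P).1 hP
  full := full_preadditiveCoyonedaObj P hP hS
  essSurj := essSurj_preadditiveCoyonedaObj P hS

end Equivalence

theorem map_coprodHomMap {D : Type*} [Category.{v} D] [Abelian D] (G : C ⥤ D) [G.Additive]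
    (P : C) {J : Type v} [DecidableEq J] [HasCoproduct fun _ : J => P]
    [HasCoproduct fun _ : J => G.obj P] (w : ⨁ _ : J, (P ⟶ P)) :
    G.map (coprodHomMap P (fun _ : J => P) w) =
      coprodHomMap (G.obj P) (fun _ : J => G.obj P) (DirectSum.map (fun _ => G.mapAddHom) w) ≫
        sigmaComparison G _ := by
  induction w using DirectSum.induction_on with
  | zero => simp
  | of j f =>
    rw [DirectSum.map_of, coprodHomMap_of, coprodHomMap_of, Category.assoc,
      ι_comp_sigmaComparison, G.map_comp]
    rfl
  | add a b ha hb => simp only [map_add, Functor.map_add, ha, hb, Preadditive.add_comp]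

theorem IsSelfSmall.map {D : Type*} [Category.{v} D] [Abelian D]
    [HasCoproducts.{v} C] [HasCoproducts.{v} D] {P : C} (h : IsSelfSmall P) {G : C ⥤ D}
    (hG : G.FullyFaithful) [G.Additive] [PreservesColimitsOfSize.{v, v} G] :
    IsSelfSmall (G.obj P) := fun J _ => by
  let κ := sigmaComparison G fun _ : J => P
  let m : (⨁ _ : J, (P ⟶ P)) ≃+ ⨁ _ : J, (G.obj P ⟶ G.obj P) :=
    DFinsupp.mapRange.addEquiv fun _ => AddEquiv.ofBijective G.mapAddHom (hG.map_bijective P P)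
  have hκ : Function.Bijective fun g : G.obj P ⟶ _ => g ≫ κ :=
    ⟨fun _ _ h => (cancel_mono κ).1 h, fun g => ⟨g ≫ inv κ, by simp⟩⟩
  have key : ((fun g => g ≫ κ) ∘ coprodHomMap (G.obj P) (fun _ : J => G.obj P)) ∘ m =
      G.map ∘ coprodHomMap P (fun _ : J => P) :=
    funext fun w => (map_coprodHomMap G P w).symm
  rw [← Function.Bijective.of_comp_iff' hκ, ← Function.Bijective.of_comp_iff _ m.bijective, key]
  exact (hG.map_bijective _ _).comp (h J)

theorem isSelfSmall_moduleCat_self (R : Type v) [Ring R] : IsSelfSmall (ModuleCat.of R R) :=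
  fun J _ => by
  let ev (X : ModuleCat.{v} R) : (ModuleCat.of R R ⟶ X) ≃+ X :=
    ModuleCat.homAddEquiv.trans (LinearMap.ringLmapEquivSelf R ℕ X).toAddEquiv
  let evalOne := (ev _).trans
    (ModuleCat.coprodIsoDirectSum fun _ : J => ModuleCat.of R R).toLinearEquiv.toAddEquiv
  let m : (⨁ _ : J, (ModuleCat.of R R ⟶ ModuleCat.of R R)) ≃+ ⨁ _ : J, R :=
    DFinsupp.mapRange.addEquiv fun _ => ev _
  have key (w) : evalOne (coprodHomMap (ModuleCat.of R R) (fun _ : J => _) w) = m w := by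
    induction w using DirectSum.induction_on with
    | zero => simp
    | of j f =>
      rw [show m (DirectSum.of _ j f) = DirectSum.of _ j (ev _ f) from
        DFinsupp.mapRange_single (f := fun _ => ev (ModuleCat.of R R)) (hf := fun _ => map_zero _),
        coprodHomMap_of]
      change ((f ≫ Sigma.ι (fun _ : J => ModuleCat.of R R) j) ≫
        (ModuleCat.coprodIsoDirectSum fun _ : J => ModuleCat.of R R).hom).hom 1 = _
      rw [Category.assoc, ModuleCat.ι_coprodIsoDirectSum_hom]
      rfl
    | add a b ha hb => simp only [map_add, ha, hb]
  refine (Function.Bijective.of_comp_iff' evalOne.bijective _).1 ?_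
  simpa only [Function.comp_def, key] using m.bijective

theorem isSeparator_moduleCat_self (R : Type v) [Ring R] : IsSeparator (ModuleCat.of R R) :=
  (Preadditive.isSeparator_iff _).2 fun X Y f hf => by
    ext x
    simpa using congr($(hf (ModuleCat.ofHom (LinearMap.toSpanSingleton R X x))) 1)

/-- an AB3 abelian category is equivalent to the category of modules over
some ring if and only if it has a self-small (compact) projective generator. -/
theorem statement12 (C : Type u) [Category.{v} C] [Abelian C] [HasCoproducts.{v} C] :
    (∃ (R : Type v) (_ : Ring R), Nonempty (C ≌ ModuleCat.{v} R)) ↔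
    (∃ P : C, Projective P ∧
      (∀ X : C, ∃ (I : Type v) (p : (∐ fun _ : I => P) ⟶ X), Epi p) ∧
      (∀ (J : Type v) [DecidableEq J],
        Function.Bijective (coprodHomMap P (fun _ : J => P)))) := by
  simp only [← isSeparator_iff_exists_epi_sigma]
  constructor
  · rintro ⟨R, _, ⟨e⟩⟩
    have : e.inverse.Additive := Functor.additive_of_preserves_binary_products _
    exact ⟨e.inverse.obj (ModuleCat.of R R),
      (e.symm.map_projective_iff _).2 (ModuleCat.of R R).projective_of_categoryTheory_projective,
      (isSeparator_moduleCat_self R).of_equivalence e.symm,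
      (isSelfSmall_moduleCat_self R).map e.fullyFaithfulInverse⟩
  · rintro ⟨P, _, hP, hS⟩
    have := isEquivalence_preadditiveCoyonedaObj P hP hS
    exact ⟨_, _, ⟨(preadditiveCoyonedaObj P).asEquivalence⟩⟩

end Paper
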